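/- For all real a > 0, b > 0, δ > 0 and c ≥ 0, the integral K₁(a,b,c,δ) = ∫₀^∞ x^c e^{−δx} [1 − (1 + b + bx + b²x²/2) e^{−bx}/(1+b)]^{a−1} dx converges and equals the sum Σ_{i=0}^∞ Σ_{j=0}^{i} Σ_{k=0}^{j} Σ_{l=0}^{k} C(a−1, i) C(i, j) C(j, k) C(k, l) (−1)^i b^j (b/2)^l Γ(c+k+l+1) / [ (1+b)^i (b i + δ)^{c+k+l+1} ], where the series over i converges. -/

import Mathlib

open Real MeasureTheory Set Filter Topology

/-- The xgamma CDF bracket: `U θ x = 1 - (1 + θ + θx + θ²x²/2) e^{-θx}/(1+θ)`. -/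
noncomputable def U (θ x : ℝ) : ℝ :=
  1 - (1 + θ + θ * x + θ ^ 2 * x ^ 2 / 2) * Real.exp (-θ * x) / (1 + θ)

/-- Generalized binomial coefficient `C(a, i) = a(a-1)⋯(a-i+1)/i!`. -/
noncomputable def genChoose (a : ℝ) (i : ℕ) : ℝ :=
  (∏ j ∈ Finset.range i, (a - j)) / (Nat.factorial i)

/-- The `i`-th term (a triple finite sum) of the series for `K₁(a,b,c,δ)`. -/
noncomputable def K1term (a b c δ : ℝ) (i : ℕ) : ℝ :=
  ∑ j ∈ Finset.range (i + 1), ∑ k ∈ Finset.range (j + 1), ∑ l ∈ Finset.range (k + 1),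
    genChoose (a - 1) i * (i.choose j) * (j.choose k) * (k.choose l) *
      (-1 : ℝ) ^ i * b ^ j * (b / 2) ^ l * Real.Gamma (c + k + l + 1) /
      ((1 + b) ^ i * (b * i + δ) ^ (c + (k : ℝ) + l + 1))

/-!
For `x > 0` the bracket satisfies `0 < 1 - U b x < 1`, so the binomial series
`U ^ (a - 1) = ∑ C(a-1, i) (-1)^i (1 - U)^i` converges pointwise. Expanding
`(1 - U)^i = (1 + b + bx + b²x²/2)^i e^{-ibx} / (1+b)^i` by the binomial theorem reduces each term
to Gamma integrals `∫ x^s e^{-rx} = Γ(s+1) / r^(s+1)`, which gives `K1term`. Summation and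
integration may be interchanged because the coefficients `C(a-1, i) (-1)^i` have constant sign for
`i ≥ ⌈a - 1⌉`, so the tail of the series converges monotonically. Integrability of the integrand
near `0` comes from a lower bound `U b x ≥ κ · min x 1` with `κ > 0`.
-/

open Finset

theorem genChoose_eq_ringChoose (a : ℝ) (n : ℕ) : genChoose a n = Ring.choose a n := by
  rw [Ring.choose_eq_smul, ← Polynomial.aeval_eq_smeval, Polynomial.aeval_def,
    ← Polynomial.eval_map, descPochhammer_map, descPochhammer_eval_eq_prod_range, genChoose,
    smul_eq_mul, div_eq_inv_mul]

theorem genChoose_succ (a : ℝ) (n : ℕ) :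
    genChoose a (n + 1) = genChoose a n * ((a - n) / (n + 1)) := by
  rw [genChoose, genChoose, prod_range_succ, Nat.factorial_succ]
  push_cast
  field_simp

theorem hasSum_genChoose_mul_neg_one_pow_mul_pow (p : ℝ) {t : ℝ} (ht : |t| < 1) :
    HasSum (fun n => genChoose p n * (-1) ^ n * t ^ n) ((1 - t) ^ p) := by
  have := (Real.one_add_rpow_hasFPowerSeriesOnBall_zero (a := p)).hasSum (y := -t)
    (by simpa [edist_zero_right, ← ofReal_norm] using ht)
  simp only [binomialSeries_apply, List.ofFn_const, List.prod_replicate, smul_eq_mul,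
    zero_add] at this
  have hterm :
      (fun n => genChoose p n * (-1) ^ n * t ^ n) = fun n => Ring.choose p n * (-t) ^ n := by
    funext n
    rw [genChoose_eq_ringChoose, neg_pow t, mul_assoc]
  rwa [hterm, sub_eq_add_neg]

/-- Consecutive coefficients have ratio `(n - p) / (n + 1)`, which is nonnegative once `n ≥ p`. -/
theorem genChoose_mul_neg_one_pow_nonneg_or_nonpos (p : ℝ) :
    (∀ n ≥ ⌈p⌉₊, 0 ≤ genChoose p n * (-1) ^ n) ∨ (∀ n ≥ ⌈p⌉₊, genChoose p n * (-1) ^ n ≤ 0) := by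
  have hstep : ∀ n ≥ ⌈p⌉₊, ∃ r ≥ 0,
      genChoose p (n + 1) * (-1) ^ (n + 1) = r * (genChoose p n * (-1) ^ n) := by
    intro n hn
    have : p ≤ n := (Nat.le_ceil p).trans (by exact_mod_cast hn)
    refine ⟨(n - p) / (n + 1), by positivity, ?_⟩
    rw [genChoose_succ, pow_succ]
    ring
  rcases le_total 0 (genChoose p ⌈p⌉₊ * (-1) ^ ⌈p⌉₊) with h | h
  · refine .inl (Nat.le_induction h fun n hn ih => ?_)
    obtain ⟨r, hr, hrec⟩ := hstep n hn
    rw [hrec]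
    exact mul_nonneg hr ih
  · refine .inr (Nat.le_induction h fun n hn ih => ?_)
    obtain ⟨r, hr, hrec⟩ := hstep n hn
    rw [hrec]
    exact mul_nonpos_of_nonneg_of_nonpos hr ih

section Interchange

variable {α : Type*} [MeasurableSpace α] {μ : Measure α} {G : ℕ → α → ℝ} {f : α → ℝ}

theorem hasSum_integral_of_hasSum_of_nonneg (hG : ∀ n, Integrable (G n) μ) (hf : Integrable f μ)
    (hG_nonneg : ∀ n, 0 ≤ᵐ[μ] G n) (hGf : ∀ᵐ x ∂μ, HasSum (fun n => G n x) (f x)) :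
    HasSum (fun n => ∫ x, G n x ∂μ) (∫ x, f x ∂μ) := by
  rw [hasSum_iff_tendsto_nat_of_nonneg (fun n => integral_nonneg_of_ae (hG_nonneg n))]
  simp_rw [← integral_finsetSum _ fun n _ => hG n]
  refine integral_tendsto_of_tendsto_of_monotone
    (fun n => integrable_finsetSum _ fun i _ => hG i) hf ?_ ?_
  · filter_upwards [ae_all_iff.2 hG_nonneg] with x hx
    exact monotone_nat_of_le_succ fun n => by simpa [sum_range_succ] using hx n
  · filter_upwards [hGf] with x hx
    exact hx.tendsto_sum_nat

theorem hasSum_integral_of_hasSum_of_eventually_nonneg_or_nonpos (hG : ∀ n, Integrable (G n) μ)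
    (hf : Integrable f μ) (M : ℕ)
    (hsign : (∀ n ≥ M, 0 ≤ᵐ[μ] G n) ∨ (∀ n ≥ M, G n ≤ᵐ[μ] 0))
    (hGf : ∀ᵐ x ∂μ, HasSum (fun n => G n x) (f x)) :
    HasSum (fun n => ∫ x, G n x ∂μ) (∫ x, f x ∂μ) := by
  have hhead : Integrable (fun x => ∑ i ∈ range M, G i x) μ :=
    integrable_finsetSum _ fun i _ => hG i
  have htail : ∀ᵐ x ∂μ, HasSum (fun n => G (n + M) x) (f x - ∑ i ∈ range M, G i x) :=
    hGf.mono fun x hx => (hasSum_nat_add_iff' M).2 hx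
  rw [← hasSum_nat_add_iff' M, ← integral_finsetSum _ fun i _ => hG i, ← integral_sub hf hhead]
  rcases hsign with h | h
  · exact hasSum_integral_of_hasSum_of_nonneg (fun n => hG _) (hf.sub hhead)
      (fun n => h _ (Nat.le_add_left M n)) htail
  · have := hasSum_integral_of_hasSum_of_nonneg (fun n => (hG (n + M)).neg) (hf.sub hhead).neg
      (fun n => (h _ (Nat.le_add_left M n)).mono fun x hx => neg_nonneg.2 hx)
      (htail.mono fun x hx => hx.neg)
    simpa only [Pi.neg_apply, Pi.sub_apply, integral_neg, neg_neg] using this.neg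

end Interchange

section Bracket

variable {b x : ℝ}

theorem one_sub_U_pos (hb : 0 < b) (hx : 0 ≤ x) : 0 < 1 - U b x := by
  rw [U, sub_sub_cancel]
  positivity

/-- Writing `1 + b + bx + (bx)²/2 = (1 + y + y²/2) + b` with `y = bx`, and using
`(1 + y + y²/2) e^{-y} ≤ 1`. -/
theorem div_one_add_mul_one_sub_exp_le_U (hb : 0 < b) (hx : 0 ≤ x) :
    b / (1 + b) * (1 - exp (-b * x)) ≤ U b x := by
  have hy : 0 ≤ b * x := mul_nonneg hb.le hx
  have hquad : (1 + b * x + (b * x) ^ 2 / 2) * exp (-b * x) ≤ 1 := by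
    rw [neg_mul, exp_neg, ← div_eq_mul_inv, div_le_one (exp_pos _)]
    exact quadratic_le_exp_of_nonneg hy
  rw [U, div_mul_eq_mul_div, div_le_iff₀ (by positivity), sub_mul,
    div_mul_cancel₀ _ (by positivity)]
  nlinarith

theorem U_pos (hb : 0 < b) (hx : 0 < x) : 0 < U b x := by
  refine lt_of_lt_of_le ?_ (div_one_add_mul_one_sub_exp_le_U hb hx.le)
  have : exp (-b * x) < 1 := exp_lt_one_iff.2 (by nlinarith)
  have : 0 < b / (1 + b) := by positivity
  nlinarith

theorem one_sub_mul_min_one_le_one_sub_exp_neg_mul (hb : 0 ≤ b) (hx : 0 ≤ x) :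
    (1 - exp (-b)) * min x 1 ≤ 1 - exp (-b * x) := by
  rcases le_total x 1 with h | h
  · rw [min_eq_left h]
    have hconv := convexOn_exp.2 (mem_univ 0) (mem_univ (-b)) (sub_nonneg.2 h) hx (by ring)
    simp only [smul_eq_mul, mul_zero, zero_add, exp_zero, mul_one] at hconv
    rw [mul_comm x] at hconv
    linarith
  · rw [min_eq_right h]
    have : exp (-b * x) ≤ exp (-b) := exp_le_exp.2 (by nlinarith)
    linarith

theorem exists_rpow_U_le (hb : 0 < b) (q : ℝ) : ∃ C, ∀ x > 0, U b x ^ q ≤ C * (x ^ q + 1) := by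
  rcases le_or_gt 0 q with hq | hq
  · refine ⟨1, fun x hx => ?_⟩
    have hU1 : U b x ≤ 1 := by linarith [one_sub_U_pos hb hx.le]
    have : 0 ≤ x ^ q := rpow_nonneg hx.le q
    linarith [rpow_le_one (U_pos hb hx).le hU1 hq]
  set κ := b / (1 + b) * (1 - exp (-b))
  have hκ : 0 < κ := mul_pos (by positivity) (sub_pos.2 (exp_lt_one_iff.2 (by linarith)))
  refine ⟨κ ^ q, fun x hx => ?_⟩
  have hmin : 0 < min x 1 := lt_min hx one_pos
  have hlower : κ * min x 1 ≤ U b x :=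
    calc κ * min x 1 = b / (1 + b) * ((1 - exp (-b)) * min x 1) := by ring
      _ ≤ b / (1 + b) * (1 - exp (-b * x)) := by
        gcongr
        exact one_sub_mul_min_one_le_one_sub_exp_neg_mul hb.le hx.le
      _ ≤ U b x := div_one_add_mul_one_sub_exp_le_U hb hx.le
  have hmin_rpow : min x 1 ^ q ≤ x ^ q + 1 := by
    rcases min_cases x 1 with ⟨he, _⟩ | ⟨he, _⟩ <;> rw [he]
    · linarith
    · linarith [one_rpow q, rpow_nonneg hx.le q]
  calc U b x ^ q ≤ (κ * min x 1) ^ q := rpow_le_rpow_of_nonpos (by positivity) hlower hq.le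
    _ = κ ^ q * min x 1 ^ q := mul_rpow hκ.le hmin.le
    _ ≤ κ ^ q * (x ^ q + 1) := by gcongr

end Bracket

theorem integrableOn_Ioi_rpow_mul_exp_neg_mul {s r : ℝ} (hs : -1 < s) (hr : 0 < r) :
    IntegrableOn (fun x => x ^ s * exp (-r * x)) (Ioi 0) := by
  simpa only [rpow_one] using integrableOn_rpow_mul_exp_neg_mul_rpow hs one_pos hr

theorem integrableOn_K1_integrand {a b c δ : ℝ} (hb : 0 < b) (hδ : 0 < δ) (hc : -1 < c)
    (hca : 0 < c + a) :
    IntegrableOn (fun x => x ^ c * exp (-δ * x) * U b x ^ (a - 1)) (Ioi 0) := by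
  obtain ⟨C, hC⟩ := exists_rpow_U_le hb (a - 1)
  have hbound := ((integrableOn_Ioi_rpow_mul_exp_neg_mul (s := c + (a - 1)) (by linarith) hδ).add
    (integrableOn_Ioi_rpow_mul_exp_neg_mul hc hδ)).const_mul C
  refine hbound.mono' (by unfold U; fun_prop) ?_
  filter_upwards [ae_restrict_mem measurableSet_Ioi] with x (hx : 0 < x)
  have hU := rpow_nonneg (U_pos hb hx).le (a - 1)
  rw [norm_of_nonneg (by positivity)]
  calc x ^ c * exp (-δ * x) * U b x ^ (a - 1)
      ≤ x ^ c * exp (-δ * x) * (C * (x ^ (a - 1) + 1)) := by gcongr; exact hC x hx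
    _ = C * (x ^ (c + (a - 1)) * exp (-δ * x) + x ^ c * exp (-δ * x)) := by
      rw [rpow_add hx]; ring

theorem one_add_pow_eq_sum {R : Type*} [CommSemiring R] (z : R) (n : ℕ) :
    (1 + z) ^ n = ∑ m ∈ range (n + 1), (n.choose m : R) * z ^ m := by
  rw [add_comm, add_pow]
  simp only [one_pow, mul_one, mul_comm]

theorem one_add_mul_one_add_mul_one_add_mul_pow {R : Type*} [CommSemiring R] (b x y : R) (i : ℕ) :
    (1 + b * (1 + x * (1 + y * x))) ^ i =
      ∑ j ∈ range (i + 1), ∑ k ∈ range (j + 1), ∑ l ∈ range (k + 1),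
        (i.choose j : R) * j.choose k * k.choose l * b ^ j * y ^ l * x ^ (k + l) := by
  rw [one_add_pow_eq_sum]
  refine sum_congr rfl fun j _ => ?_
  rw [mul_pow, one_add_pow_eq_sum, mul_sum, mul_sum]
  refine sum_congr rfl fun k _ => ?_
  rw [mul_pow, one_add_pow_eq_sum, mul_sum, mul_sum, mul_sum, mul_sum]
  refine sum_congr rfl fun l _ => ?_
  ring

theorem setIntegral_Ioi_rpow_mul_exp_neg_mul {s r : ℝ} (hs : -1 < s) (hr : 0 < r) :
    ∫ x in Ioi 0, x ^ s * exp (-r * x) = Gamma (s + 1) / r ^ (s + 1) := by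
  have := integral_rpow_mul_exp_neg_mul_Ioi (a := s + 1) (by linarith) hr
  simp only [add_sub_cancel_right] at this
  simp only [neg_mul]
  rw [this, one_div, inv_rpow hr.le]
  ring

section Terms

variable {b c δ x : ℝ}

/-- `1 - U b x = (1 + b (1 + x (1 + (b/2) x))) e^{-bx} / (1 + b)`, expanded by the binomial theorem
three times. -/
theorem rpow_mul_exp_mul_one_sub_U_pow_eq_sum (hx : 0 < x) (i : ℕ) :
    x ^ c * exp (-δ * x) * (1 - U b x) ^ i =
      ∑ j ∈ range (i + 1), ∑ k ∈ range (j + 1), ∑ l ∈ range (k + 1),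
        (i.choose j * j.choose k * k.choose l : ℝ) * b ^ j * (b / 2) ^ l / (1 + b) ^ i *
          (x ^ (c + k + l) * exp (-(b * i + δ) * x)) := by
  have hU : 1 - U b x = (1 + b * (1 + x * (1 + b / 2 * x))) * exp (-b * x) / (1 + b) := by
    rw [U]; ring
  have hpow : ∀ k l : ℕ, x ^ (c + k + l) * exp (-(b * i + δ) * x) =
      x ^ c * exp (-δ * x) * exp (-b * x) ^ i * x ^ (k + l) := by
    intro k l
    have hexp : exp (-(b * i + δ) * x) = exp (-δ * x) * exp (-b * x) ^ i := by
      rw [← exp_nat_mul, ← exp_add]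
      ring_nf
    rw [show c + k + l = c + ((k + l : ℕ) : ℝ) by push_cast; ring, rpow_add hx, rpow_natCast, hexp]
    ring
  simp_rw [hpow]
  rw [hU, div_pow, mul_pow, one_add_mul_one_add_mul_one_add_mul_pow]
  simp only [mul_sum, sum_mul, sum_div]
  refine sum_congr rfl fun j _ => sum_congr rfl fun k _ => sum_congr rfl fun l _ => ?_
  ring

theorem neg_one_lt_add_natCast_add_natCast (hc : -1 < c) (k l : ℕ) : -1 < c + k + l := by
  have : (0 : ℝ) ≤ k + l := by positivity
  linarith

theorem integrableOn_rpow_mul_exp_mul_one_sub_U_pow (hb : 0 ≤ b) (hδ : 0 < δ) (hc : -1 < c)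
    (i : ℕ) :
    IntegrableOn (fun x => x ^ c * exp (-δ * x) * (1 - U b x) ^ i) (Ioi 0) := by
  refine IntegrableOn.congr_fun ?_ (fun x hx => (rpow_mul_exp_mul_one_sub_U_pow_eq_sum hx i).symm)
    measurableSet_Ioi
  refine integrable_finsetSum _ fun j _ => integrable_finsetSum _ fun k _ =>
    integrable_finsetSum _ fun l _ => Integrable.const_mul ?_ _
  exact integrableOn_Ioi_rpow_mul_exp_neg_mul (neg_one_lt_add_natCast_add_natCast hc _ _)
    (by positivity)

theorem setIntegral_rpow_mul_exp_mul_one_sub_U_pow (hb : 0 ≤ b) (hδ : 0 < δ) (hc : -1 < c)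
    (i : ℕ) :
    ∫ x in Ioi 0, x ^ c * exp (-δ * x) * (1 - U b x) ^ i =
      ∑ j ∈ range (i + 1), ∑ k ∈ range (j + 1), ∑ l ∈ range (k + 1),
        (i.choose j * j.choose k * k.choose l : ℝ) * b ^ j * (b / 2) ^ l / (1 + b) ^ i *
          (Gamma (c + k + l + 1) / (b * i + δ) ^ (c + k + l + 1)) := by
  have hint : ∀ k l : ℕ, IntegrableOn (fun x => x ^ (c + k + l) * exp (-(b * i + δ) * x))
      (Ioi 0) := fun k l =>
    integrableOn_Ioi_rpow_mul_exp_neg_mul (neg_one_lt_add_natCast_add_natCast hc k l)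
      (by positivity)
  rw [setIntegral_congr_fun measurableSet_Ioi fun x hx =>
      rpow_mul_exp_mul_one_sub_U_pow_eq_sum hx i,
    integral_finsetSum _ fun j _ => integrable_finsetSum _ fun k _ =>
      integrable_finsetSum _ fun l _ => (hint k l).const_mul _]
  refine sum_congr rfl fun j _ => ?_
  rw [integral_finsetSum _ fun k _ => integrable_finsetSum _ fun l _ => (hint k l).const_mul _]
  refine sum_congr rfl fun k _ => ?_
  rw [integral_finsetSum _ fun l _ => (hint k l).const_mul _]
  refine sum_congr rfl fun l _ => ?_
  rw [integral_const_mul,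
    setIntegral_Ioi_rpow_mul_exp_neg_mul (neg_one_lt_add_natCast_add_natCast hc _ _)
    (by positivity)]

end Terms

section Series

variable {a b c δ : ℝ}

theorem K1term_eq_setIntegral (hb : 0 ≤ b) (hδ : 0 < δ) (hc : -1 < c) (i : ℕ) :
    K1term a b c δ i =
      ∫ x in Ioi 0, genChoose (a - 1) i * (-1) ^ i * (x ^ c * exp (-δ * x) * (1 - U b x) ^ i) := by
  rw [integral_const_mul, setIntegral_rpow_mul_exp_mul_one_sub_U_pow hb hδ hc, K1term, mul_sum]
  refine sum_congr rfl fun j _ => ?_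
  rw [mul_sum]
  refine sum_congr rfl fun k _ => ?_
  rw [mul_sum]
  refine sum_congr rfl fun l _ => ?_
  ring

theorem hasSum_setIntegral_K1_terms (hb : 0 < b) (hδ : 0 < δ) (hc : -1 < c) (hca : 0 < c + a) :
    HasSum (fun i => ∫ x in Ioi 0,
        genChoose (a - 1) i * (-1) ^ i * (x ^ c * exp (-δ * x) * (1 - U b x) ^ i))
      (∫ x in Ioi 0, x ^ c * exp (-δ * x) * U b x ^ (a - 1)) := by
  refine hasSum_integral_of_hasSum_of_eventually_nonneg_or_nonpos
    (fun i => (integrableOn_rpow_mul_exp_mul_one_sub_U_pow hb.le hδ hc i).const_mul _)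
    (integrableOn_K1_integrand hb hδ hc hca) ⌈a - 1⌉₊ ?_ ?_
  · have hweight : ∀ n, ∀ᵐ x ∂volume.restrict (Ioi 0),
        0 ≤ x ^ c * exp (-δ * x) * (1 - U b x) ^ n := fun n =>
      (ae_restrict_mem measurableSet_Ioi).mono fun x (hx : 0 < x) => by
        have := one_sub_U_pos hb hx.le
        positivity
    rcases genChoose_mul_neg_one_pow_nonneg_or_nonpos (a - 1) with h | h
    · exact .inl fun n hn => (hweight n).mono fun x hx => mul_nonneg (h n hn) hx
    · exact .inr fun n hn => (hweight n).mono fun x hx => mul_nonpos_of_nonpos_of_nonneg (h n hn) hx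
  · filter_upwards [ae_restrict_mem measurableSet_Ioi] with x (hx : 0 < x)
    have hU := one_sub_U_pos hb hx.le
    have habs : |1 - U b x| < 1 := by
      rw [abs_lt]
      constructor <;> linarith [U_pos hb hx]
    have := (hasSum_genChoose_mul_neg_one_pow_mul_pow (a - 1) habs).mul_left (x ^ c * exp (-δ * x))
    rw [sub_sub_cancel] at this
    simpa only [mul_left_comm (x ^ c * exp (-δ * x))] using this

end Series

theorem K1_integral_eq_series (a b c δ : ℝ) (ha : 0 < a) (hb : 0 < b) (hδ : 0 < δ)
    (hc : 0 ≤ c) :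
    IntegrableOn (fun x : ℝ => x ^ c * Real.exp (-δ * x) * (U b x) ^ (a - 1))
      (Set.Ioi 0) ∧
    HasSum (fun i : ℕ => K1term a b c δ i)
      (∫ x in Set.Ioi 0, x ^ c * Real.exp (-δ * x) * (U b x) ^ (a - 1)) := by
  have hc' : -1 < c := by linarith
  have hca : 0 < c + a := by linarith
  refine ⟨integrableOn_K1_integrand hb hδ hc' hca, ?_⟩
  simpa only [K1term_eq_setIntegral hb.le hδ hc'] using hasSum_setIntegral_K1_terms hb hδ hc' hca
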